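/- The randomized online algorithm RankingSimulate achieves expected second-price-matching profit at least (1/2)·OPT_{2P}·(1 − e^{−1/2} + o(1)) on any Second-Price Matching instance in which every keyword has degree at least 2, where OPT_{2P} is the optimal offline second-price matching value; hence its competitive ratio is at most 2√e/(√e − 1) ≈ 5.083. -/

import Mathlib

/-- A second-price matching (2PM): keywords `Fin m` arrive in index order;
`S` is the set of matched keywords, `g u` the bidder matched to `u` and `w u`
the second-price bidder, both adjacent to `u` and unmatched at `u`'s arrival. -/
def IsSecondPriceMatching {m : ℕ} {B : Type*} (A : Fin m → B → Prop)
    (S : Finset (Fin m)) (g w : Fin m → B) : Prop :=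
  (∀ u ∈ S, A u (g u) ∧ A u (w u) ∧ g u ≠ w u) ∧
  (∀ u ∈ S, ∀ u' ∈ S, u ≠ u' → g u ≠ g u') ∧
  (∀ u ∈ S, ∀ u' ∈ S, u' < u → g u' ≠ g u ∧ g u' ≠ w u)

/-- The state `(M, R, profit)` of RankingSimulate after the first `t` keywords:
`M` are matched bidders, `R` reserved bidders, and the profit counts keywords matched
to a bidder while some other adjacent bidder was still unmatched. -/
noncomputable def simStateP (m : ℕ) {V : Type*} [Fintype V] [DecidableEq V]
    (A : Fin m → V → Prop) [∀ t v, Decidable (A t v)] (rk : V → ℕ)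
    (r : Fin m → Bool) : ℕ → Finset V × Finset V × ℕ
  | 0 => (∅, ∅, 0)
  | t + 1 =>
    let s := simStateP m A rk r t
    if h : t < m then
      let u : Fin m := ⟨t, h⟩
      let gain : V → ℕ := fun vm =>
        if ∃ v' : V, v' ≠ vm ∧ A u v' ∧ v' ∉ s.1 then 1 else 0
      let N := Finset.univ.filter fun v => A u v ∧ v ∉ s.1 ∧ v ∉ s.2.1
      if hne : N.Nonempty then
        let v1 := Function.argminOn rk ↑N (Finset.coe_nonempty.mpr hne)
        let N2 := N.erase v1
        if hne2 : N2.Nonempty then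
          let v2 := Function.argminOn rk ↑N2 (Finset.coe_nonempty.mpr hne2)
          if r u then (insert v1 s.1, insert v2 s.2.1, s.2.2 + gain v1)
          else (insert v2 s.1, insert v1 s.2.1, s.2.2 + gain v2)
        else
          if r u then (insert v1 s.1, s.2.1, s.2.2 + gain v1)
          else (s.1, insert v1 s.2.1, s.2.2)
      else s
    else s

/-!
Fix the ranking. The set of bidders matched or reserved by RankingSimulate does not depend on
the coins: at each keyword the two available neighbours of smallest rank are taken (one if only
one is available), and the coin merely decides which one is matched. Call a keyword a pair step
if at least two neighbours are available at its arrival, and a single step if exactly one is.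
A pair step always earns profit, since the reserved neighbour stays unmatched. At a single step
the keyword has a second, already covered neighbour, which was reserved at some earlier keyword
`e` for one value of `e`'s coin; with probability `1/4` both that coin and the current one fall
right and the step earns profit. So the expected profit is at least `a + b/4` for `a` pair steps
and `b` single steps. Conversely, an optimal second-price matching matches its keywords to
distinct bidders, each keyword is a pair step or has its bidder covered by the end, and at most
`2a + b` bidders get covered; hence `OPT ≤ 3a + b ≤ 4 (a + b/4)`. As `1 - e^{-1/2} ≤ 1/2`, the
resulting bound `OPT/4` is stronger than the claimed one.
-/

open Finset Function

lemma add_sum_le_of_add_le_succ {M : Type*} [AddCommMonoid M] [PartialOrder M]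
    [IsOrderedAddMonoid M] {m : ℕ} {f : ℕ → M} {c : Fin m → M}
    (h : ∀ u : Fin m, f u + c u ≤ f (u + 1)) : f 0 + ∑ u, c u ≤ f m := by
  induction m with
  | zero => simp
  | succ m ih =>
    rw [Fin.sum_univ_castSucc, ← add_assoc]
    calc f 0 + ∑ u : Fin m, c u.castSucc + c (Fin.last m) ≤ f m + c (Fin.last m) :=
          add_le_add_left (ih fun u => h u.castSucc) _
      _ ≤ f (m + 1) := h (Fin.last m)

lemma le_add_sum_of_le_add_succ {M : Type*} [AddCommMonoid M] [PartialOrder M]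
    [IsOrderedAddMonoid M] {m : ℕ} {f : ℕ → M} {c : Fin m → M}
    (h : ∀ u : Fin m, f (u + 1) ≤ f u + c u) : f m ≤ f 0 + ∑ u, c u :=
  add_sum_le_of_add_le_succ (M := Mᵒᵈ) h

lemma card_filter_apply_eq_and_apply_eq_mul {ι β : Type*} [Fintype ι] [DecidableEq ι]
    [Fintype β] [DecidableEq β] {i j : ι} (hij : i ≠ j) (a b : β) :
    #{f : ι → β | f i = a ∧ f j = b} * Fintype.card β ^ 2 = Fintype.card β ^ Fintype.card ι := by
  let e : {f : ι → β // f i = a ∧ f j = b} × β × β ≃ (ι → β) :=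
    { toFun := fun p => update (update p.1.1 i p.2.1) j p.2.2
      invFun := fun f => (⟨update (update f i a) j b, by simp [hij]⟩, f i, f j)
      left_inv := by
        rintro ⟨⟨f, hfi, hfj⟩, x, y⟩
        ext k
        · simp only [update_apply]; split_ifs <;> simp_all
        · simp [hij]
        · simp
      right_inv := fun f => by ext k; simp only [update_apply]; split_ifs <;> simp_all }
  rw [← Fintype.card_subtype, ← Fintype.card_fun, ← Fintype.card_congr e]
  simp [sq]

section RankingSimulate

variable {m : ℕ} {V : Type*} [Fintype V] [DecidableEq V] (A : Fin m → V → Prop)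
  [∀ u v, Decidable (A u v)] (rk : V → ℕ)

local notation "𝒮" => simStateP m A rk

noncomputable def available (r : Fin m → Bool) (u : Fin m) : Finset V :=
  {v | A u v ∧ v ∉ (𝒮 r u).1 ∧ v ∉ (𝒮 r u).2.1}

noncomputable def gain (r : Fin m → Bool) (u : Fin m) (v : V) : ℕ :=
  if ∃ v' ≠ v, A u v' ∧ v' ∉ (𝒮 r u).1 then 1 else 0

noncomputable def covered (r : Fin m → Bool) (t : ℕ) : Finset V := (𝒮 r t).1 ∪ (𝒮 r t).2.1

lemma mem_available {r : Fin m → Bool} {u : Fin m} {v : V} :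
    v ∈ available A rk r u ↔ A u v ∧ v ∉ covered A rk r u := by
  simp [available, covered]

lemma simStateP_succ_of_le (r : Fin m → Bool) {t : ℕ} (h : m ≤ t) : 𝒮 r (t + 1) = 𝒮 r t := by
  rw [simStateP, dif_neg (by omega)]

lemma simStateP_succ (r : Fin m → Bool) (u : Fin m) : 𝒮 r (u + 1) =
    if hne : (available A rk r u).Nonempty then
      let v₁ := Function.argminOn rk ↑(available A rk r u) (coe_nonempty.mpr hne)
      if hne₂ : ((available A rk r u).erase v₁).Nonempty then
        let v₂ := Function.argminOn rk ↑((available A rk r u).erase v₁) (coe_nonempty.mpr hne₂)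
        if r u then (insert v₁ (𝒮 r u).1, insert v₂ (𝒮 r u).2.1, (𝒮 r u).2.2 + gain A rk r u v₁)
        else (insert v₂ (𝒮 r u).1, insert v₁ (𝒮 r u).2.1, (𝒮 r u).2.2 + gain A rk r u v₂)
      else if r u then (insert v₁ (𝒮 r u).1, (𝒮 r u).2.1, (𝒮 r u).2.2 + gain A rk r u v₁)
        else ((𝒮 r u).1, insert v₁ (𝒮 r u).2.1, (𝒮 r u).2.2)
    else 𝒮 r u := by
  rw [simStateP, dif_pos u.isLt]
  rfl

/-- The bidders picked at `u` are determined by the available set `N` alone; the coin only decides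
which of them is matched. -/
lemma simStateP_succ_cases (u : Fin m) (N : Finset V) :
    (N = ∅ ∧ ∀ r, available A rk r u = N → 𝒮 r (u + 1) = 𝒮 r u) ∨
    (∃ v, N = {v} ∧ ∀ r, available A rk r u = N → 𝒮 r (u + 1) =
      if r u then (insert v (𝒮 r u).1, (𝒮 r u).2.1, (𝒮 r u).2.2 + gain A rk r u v)
      else ((𝒮 r u).1, insert v (𝒮 r u).2.1, (𝒮 r u).2.2)) ∨
    (∃ v₁ v₂, v₁ ≠ v₂ ∧ v₁ ∈ N ∧ v₂ ∈ N ∧ ∀ r, available A rk r u = N → 𝒮 r (u + 1) =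
      if r u then (insert v₁ (𝒮 r u).1, insert v₂ (𝒮 r u).2.1, (𝒮 r u).2.2 + gain A rk r u v₁)
      else (insert v₂ (𝒮 r u).1, insert v₁ (𝒮 r u).2.1, (𝒮 r u).2.2 + gain A rk r u v₂)) := by
  rcases N.eq_empty_or_nonempty with rfl | hne
  · exact Or.inl ⟨rfl, fun r hr => by rw [simStateP_succ, dif_neg (by simp [hr])]⟩
  set v₁ := Function.argminOn rk ↑N (coe_nonempty.mpr hne)
  have hv₁ : v₁ ∈ N := Function.argminOn_mem ..
  rcases (N.erase v₁).eq_empty_or_nonempty with hN | hne₂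
  · refine Or.inr (Or.inl ⟨v₁, ?_, fun r hr => ?_⟩)
    · simpa [hne.ne_empty] using erase_eq_empty_iff N v₁ |>.mp hN
    · subst hr
      rw [simStateP_succ, dif_pos hne, dif_neg (not_nonempty_iff_eq_empty.mpr hN)]
  · set v₂ := Function.argminOn rk ↑(N.erase v₁) (coe_nonempty.mpr hne₂)
    have hv₂ : v₂ ∈ N.erase v₁ := Function.argminOn_mem ..
    refine Or.inr (Or.inr ⟨v₁, v₂, (ne_of_mem_erase hv₂).symm, hv₁, mem_of_mem_erase hv₂,
      fun r hr => ?_⟩)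
    subst hr
    rw [simStateP_succ, dif_pos hne, dif_pos hne₂]

lemma exists_covered_succ_eq_union (u : Fin m) (N : Finset V) :
    ∃ X ⊆ N, #X = min 2 #N ∧
      ∀ r, available A rk r u = N → covered A rk r (u + 1) = covered A rk r u ∪ X := by
  rcases simStateP_succ_cases A rk u N with ⟨rfl, hs⟩ | ⟨v, rfl, hs⟩ | ⟨v₁, v₂, hne, hv₁, hv₂, hs⟩
  · exact ⟨∅, subset_rfl, by simp, fun r hr => by simp [covered, hs r hr]⟩
  · refine ⟨{v}, subset_rfl, by simp, fun r hr => ?_⟩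
    cases hb : r u <;> ext x <;> simp [covered, hs r hr, hb]
  · have hcard : 2 ≤ #N := by
      simpa [hne] using card_le_card (insert_subset hv₁ (singleton_subset_iff.mpr hv₂))
    refine ⟨{v₁, v₂}, insert_subset hv₁ (singleton_subset_iff.mpr hv₂), ?_, fun r hr => ?_⟩
    · rw [card_pair hne]; omega
    · cases hb : r u <;> ext x <;> simp [covered, hs r hr, hb]; tauto

lemma covered_eq (r r' : Fin m → Bool) (t : ℕ) : covered A rk r t = covered A rk r' t := by
  induction t with
  | zero => simp [covered, simStateP]
  | succ t ih =>
    obtain h | h := lt_or_ge t m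
    · obtain ⟨X, -, -, hX⟩ := exists_covered_succ_eq_union A rk ⟨t, h⟩ (available A rk r ⟨t, h⟩)
      have hN : available A rk r' ⟨t, h⟩ = available A rk r ⟨t, h⟩ := by
        ext v; simp [mem_available, ih]
      rw [hX r rfl, hX r' hN, ih]
    · simpa only [covered, simStateP_succ_of_le A rk _ h] using ih

lemma available_eq (r r' : Fin m → Bool) (u : Fin m) :
    available A rk r u = available A rk r' u := by
  ext v; simp [mem_available, covered_eq A rk r r']

lemma monotone_simStateP_of_le_succ {α : Type*} [Preorder α] (f : Finset V × Finset V × ℕ → α)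
    (h : ∀ r (u : Fin m), f (𝒮 r u) ≤ f (𝒮 r (u + 1))) (r : Fin m → Bool) :
    Monotone fun t => f (𝒮 r t) := by
  refine monotone_nat_of_le_succ fun t => ?_
  obtain h' | h' := lt_or_ge t m
  · exact h r ⟨t, h'⟩
  · simp only [simStateP_succ_of_le A rk r h', le_refl]

lemma covered_monotone (r : Fin m → Bool) : Monotone (covered A rk r) :=
  monotone_simStateP_of_le_succ A rk (fun s => s.1 ∪ s.2.1) (fun r u => by
    obtain ⟨X, -, -, hX⟩ := exists_covered_succ_eq_union A rk u (available A rk r u)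
    show covered A rk r u ⊆ covered A rk r (u + 1)
    exact (hX r rfl).symm ▸ subset_union_left) r

lemma reserved_monotone (r : Fin m → Bool) : Monotone fun t => (𝒮 r t).2.1 :=
  monotone_simStateP_of_le_succ A rk (fun s => s.2.1) (fun r u => by
    rcases simStateP_succ_cases A rk u (available A rk r u) with
      ⟨-, hs⟩ | ⟨v, -, hs⟩ | ⟨v₁, v₂, -, -, -, hs⟩ <;>
      rw [hs r rfl] <;> split_ifs <;> simp [subset_insert]) r

lemma profit_monotone (r : Fin m → Bool) : Monotone fun t => (𝒮 r t).2.2 :=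
  monotone_simStateP_of_le_succ A rk (fun s => s.2.2) (fun r u => by
    rcases simStateP_succ_cases A rk u (available A rk r u) with
      ⟨-, hs⟩ | ⟨v, -, hs⟩ | ⟨v₁, v₂, -, -, -, hs⟩ <;>
      rw [hs r rfl] <;> split_ifs <;> simp) r

lemma disjoint_matched_reserved (r : Fin m → Bool) (t : ℕ) :
    Disjoint (𝒮 r t).1 (𝒮 r t).2.1 := by
  induction t with
  | zero => simp [simStateP]
  | succ t ih =>
    obtain h | h := lt_or_ge t m
    swap
    · rwa [simStateP_succ_of_le A rk r h]
    obtain ⟨u, rfl⟩ : ∃ u : Fin m, (u : ℕ) = t := ⟨⟨t, h⟩, rfl⟩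
    have hnew : ∀ v ∈ available A rk r u, v ∉ (𝒮 r u).1 ∧ v ∉ (𝒮 r u).2.1 := fun v hv =>
      (mem_filter.mp hv).2.2
    rcases simStateP_succ_cases A rk u (available A rk r u) with
      ⟨-, hs⟩ | ⟨v, hN, hs⟩ | ⟨v₁, v₂, hne, hv₁, hv₂, hs⟩
    · rwa [hs r rfl]
    · have hv := hnew v (hN ▸ mem_singleton_self v)
      rw [hs r rfl]; split_ifs <;> simp [ih, hv]
    · have h₁ := hnew v₁ hv₁
      have h₂ := hnew v₂ hv₂
      rw [hs r rfl]; split_ifs <;> simp [ih, h₁, h₂, hne, hne.symm]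

lemma notMem_matched_of_mem_reserved {r : Fin m → Bool} {s t : ℕ} {v : V}
    (hv : v ∈ (𝒮 r s).2.1) (hst : s ≤ t) : v ∉ (𝒮 r t).1 := fun hM =>
  disjoint_left.mp (disjoint_matched_reserved A rk r t) hM (reserved_monotone A rk r hst hv)

lemma gain_eq_one {r : Fin m → Bool} {u : Fin m} {v : V}
    (hw : ∃ v' ≠ v, A u v' ∧ v' ∉ (𝒮 r u).1) : gain A rk r u v = 1 :=
  if_pos hw

lemma profit_succ_of_two_le_card (r : Fin m → Bool) (u : Fin m)
    (h : 2 ≤ #(available A rk r u)) : (𝒮 r (u + 1)).2.2 = (𝒮 r u).2.2 + 1 := by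
  rcases simStateP_succ_cases A rk u (available A rk r u) with
    ⟨hN, -⟩ | ⟨v, hN, -⟩ | ⟨v₁, v₂, hne, hv₁, hv₂, hs⟩
  · simp [hN] at h
  · simp [hN] at h
  · have h₁ := (mem_available A rk).mp hv₁
    have h₂ := (mem_available A rk).mp hv₂
    rw [hs r rfl]
    split_ifs
    · rw [gain_eq_one A rk ⟨v₂, hne.symm, h₂.1, fun hv => h₂.2 (mem_union_left _ hv)⟩]
    · rw [gain_eq_one A rk ⟨v₁, hne, h₁.1, fun hv => h₁.2 (mem_union_left _ hv)⟩]

lemma profit_succ_of_available_eq_singleton {r : Fin m → Bool} {u : Fin m} {v : V}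
    (hN : available A rk r u = {v}) (hr : r u = true)
    (hw : ∃ v' ≠ v, A u v' ∧ v' ∉ (𝒮 r u).1) : (𝒮 r (u + 1)).2.2 = (𝒮 r u).2.2 + 1 := by
  rcases simStateP_succ_cases A rk u {v} with
    ⟨hN', -⟩ | ⟨v', hN', hs⟩ | ⟨v₁, v₂, hne, hv₁, hv₂, -⟩
  · simp at hN'
  · obtain rfl : v = v' := singleton_inj.mp hN'
    rw [hs r hN, if_pos hr, gain_eq_one A rk hw]
  · exact absurd ((mem_singleton.mp hv₁).trans (mem_singleton.mp hv₂).symm) hne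

lemma exists_coin_mem_reserved_succ {r : Fin m → Bool} {u : Fin m} {v : V}
    (hv : v ∈ covered A rk r (u + 1)) (hv' : v ∉ covered A rk r u) :
    ∃ c, ∀ r', r' u = c → v ∈ (𝒮 r' (u + 1)).2.1 := by
  rcases simStateP_succ_cases A rk u (available A rk r u) with
    ⟨-, hs⟩ | ⟨w, -, hs⟩ | ⟨v₁, v₂, -, -, -, hs⟩
  · simp only [covered, hs r rfl] at hv
    exact absurd hv hv'
  · obtain rfl : v = w := by
      simp only [covered, hs r rfl] at hv hv'
      split_ifs at hv <;> simp_all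
    exact ⟨false, fun r' hr' => by simp [hs r' (available_eq A rk r' r u), hr']⟩
  · have : v = v₁ ∨ v = v₂ := by
      simp only [covered, hs r rfl] at hv hv'
      split_ifs at hv <;> simp at hv hv' <;> tauto
    rcases this with rfl | rfl
    · exact ⟨false, fun r' hr' => by simp [hs r' (available_eq A rk r' r u), hr']⟩
    · exact ⟨true, fun r' hr' => by simp [hs r' (available_eq A rk r' r u), hr']⟩

lemma exists_coin_mem_reserved {r : Fin m → Bool} {t : ℕ} {v : V} (hv : v ∈ covered A rk r t) :
    ∃ e : Fin m, (e : ℕ) < t ∧ ∃ c, ∀ r', r' e = c → v ∈ (𝒮 r' (e + 1)).2.1 := by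
  induction t with
  | zero => simp [covered, simStateP] at hv
  | succ t ih =>
    by_cases hv' : v ∈ covered A rk r t
    · obtain ⟨e, he, hc⟩ := ih hv'
      exact ⟨e, he.trans (lt_add_one t), hc⟩
    obtain h | h := lt_or_ge t m
    · exact ⟨⟨t, h⟩, lt_add_one t, exists_coin_mem_reserved_succ A rk (u := ⟨t, h⟩) hv hv'⟩
    · simp only [covered, simStateP_succ_of_le A rk r h] at hv
      exact absurd hv hv'

lemma exists_coins_profit_succ {u : Fin m} (hdeg : ∃ x y, x ≠ y ∧ A u x ∧ A u y)
    {r : Fin m → Bool} {v : V} (hN : available A rk r u = {v}) :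
    ∃ e ≠ u, ∃ c, ∀ r', r' u = true → r' e = c → (𝒮 r' (u + 1)).2.2 = (𝒮 r' u).2.2 + 1 := by
  obtain ⟨w, hwv, hw⟩ : ∃ w ≠ v, A u w := by
    obtain ⟨x, y, hxy, hx, hy⟩ := hdeg
    by_cases hxv : x = v
    · exact ⟨y, hxv ▸ hxy.symm, hy⟩
    · exact ⟨x, hxv, hx⟩
  have hwc : w ∈ covered A rk r u := by
    by_contra hwc
    exact hwv (mem_singleton.mp (hN ▸ (mem_available A rk).mpr ⟨hw, hwc⟩))
  obtain ⟨e, he, c, hc⟩ := exists_coin_mem_reserved A rk hwc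
  refine ⟨e, Fin.ne_of_lt he, c, fun r' hu he' => ?_⟩
  refine profit_succ_of_available_eq_singleton A rk ((available_eq A rk r' r u).trans hN) hu
    ⟨w, hwv, hw, notMem_matched_of_mem_reserved A rk (hc r' he') he⟩

lemma card_covered_succ_le (r : Fin m → Bool) (u : Fin m) :
    #(covered A rk r (u + 1)) ≤ #(covered A rk r u) + min 2 #(available A rk r u) := by
  obtain ⟨X, -, hX, hcov⟩ := exists_covered_succ_eq_union A rk u (available A rk r u)
  rw [hcov r rfl, ← hX]
  exact card_union_le _ _

lemma mem_covered_succ_of_card_le_one {r : Fin m → Bool} {u : Fin m} {v : V} (hv : A u v)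
    (h : #(available A rk r u) ≤ 1) : v ∈ covered A rk r (u + 1) := by
  obtain ⟨X, hXN, hX, hcov⟩ := exists_covered_succ_eq_union A rk u (available A rk r u)
  obtain rfl : X = available A rk r u := eq_of_subset_of_card_le hXN (by omega)
  rw [hcov r rfl, mem_union, mem_available]
  tauto

/-- A keyword of the optimum is charged to its own arrival when two of its neighbours are
available then, and otherwise to the arrival that covered its bidder; an arrival with `k`
available neighbours covers `min 2 k` bidders. -/
def charge (k : ℕ) : ℕ := if 2 ≤ k then 3 else k

lemma card_le_sum_charge (r : Fin m → Bool) {S : Finset (Fin m)} {g : Fin m → V}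
    (hA : ∀ u ∈ S, A u (g u)) (hg : Set.InjOn g S) :
    #S ≤ ∑ u, charge #(available A rk r u) := by
  let pair u := 2 ≤ #(available A rk r u)
  have hcov : #(S.filter fun u => ¬ pair u) ≤ ∑ u, min 2 #(available A rk r u) := calc
    _ ≤ #(covered A rk r m) := by
      refine card_le_card_of_injOn g (fun u hu => ?_) (hg.mono (filter_subset _ _))
      obtain ⟨huS, hu⟩ := mem_filter.mp hu
      exact covered_monotone A rk r u.isLt
        (mem_covered_succ_of_card_le_one A rk (hA u huS) (by omega))
    _ ≤ ∑ u, min 2 #(available A rk r u) := by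
      simpa only [show covered A rk r 0 = ∅ from rfl, card_empty, zero_add] using
        le_add_sum_of_le_add_succ (f := fun t => #(covered A rk r t)) (card_covered_succ_le A rk r)
  calc #S = #(S.filter pair) + #(S.filter fun u => ¬ pair u) :=
        (card_filter_add_card_filter_not _).symm
    _ ≤ ∑ u, (if pair u then 1 else 0) + ∑ u, min 2 #(available A rk r u) := by
        rw [← card_filter]
        exact add_le_add (card_le_card (filter_subset_filter _ (subset_univ S))) hcov
    _ = ∑ u, charge #(available A rk r u) := by
        rw [← sum_add_distrib]
        refine sum_congr rfl fun u _ => ?_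
        unfold charge pair
        split_ifs <;> omega

lemma charge_mul_two_pow_le (r : Fin m → Bool) {u : Fin m} (hdeg : ∃ x y, x ≠ y ∧ A u x ∧ A u y) :
    charge #(available A rk r u) * 2 ^ m ≤ 4 * ∑ r', ((𝒮 r' (u + 1)).2.2 - (𝒮 r' u).2.2) := by
  obtain h | h | h : #(available A rk r u) = 0 ∨ #(available A rk r u) = 1 ∨
      2 ≤ #(available A rk r u) := by omega
  · simp [h, charge]
  · obtain ⟨v, hv⟩ := card_eq_one.mp h
    obtain ⟨e, he, c, hc⟩ := exists_coins_profit_succ A rk hdeg hv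
    have hcount := card_filter_apply_eq_and_apply_eq_mul he.symm true c
    simp only [Fintype.card_bool, Fintype.card_fin] at hcount
    calc charge #(available A rk r u) * 2 ^ m
        = 4 * #{r' : Fin m → Bool | r' u = true ∧ r' e = c} := by
          rw [h, ← hcount]; simp [charge]; ring
      _ ≤ 4 * ∑ r', ((𝒮 r' (u + 1)).2.2 - (𝒮 r' u).2.2) := by
          rw [card_filter]
          gcongr with r'
          split_ifs with hr'
          · rw [hc r' hr'.1 hr'.2]; omega
          · exact Nat.zero_le _
  · have hΔ : ∀ r', (𝒮 r' (u + 1)).2.2 - (𝒮 r' u).2.2 = 1 := fun r' => by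
      rw [profit_succ_of_two_le_card A rk r' u (available_eq A rk r' r u ▸ h)]; omega
    simp only [hΔ, charge, if_pos h, sum_const, card_univ, Fintype.card_fun, Fintype.card_bool,
      Fintype.card_fin, smul_eq_mul, mul_one]
    omega

theorem card_mul_two_pow_le_four_mul_sum_profit (hdeg : ∀ u, ∃ x y, x ≠ y ∧ A u x ∧ A u y)
    {S : Finset (Fin m)} {g : Fin m → V} (hA : ∀ u ∈ S, A u (g u)) (hg : Set.InjOn g S) :
    #S * 2 ^ m ≤ 4 * ∑ r, (𝒮 r m).2.2 := by
  have htel (r : Fin m → Bool) : ∑ u : Fin m, ((𝒮 r (u + 1)).2.2 - (𝒮 r u).2.2) ≤ (𝒮 r m).2.2 := by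
    simpa only [show (𝒮 r 0).2.2 = 0 from rfl, zero_add] using
      add_sum_le_of_add_le_succ (f := fun t => (𝒮 r t).2.2) fun u =>
        (Nat.add_sub_cancel' (profit_monotone A rk r (Nat.le_succ u))).le
  -- the available sets are the same for all coins (`available_eq`), so any `r₀` will do
  let r₀ : Fin m → Bool := fun _ => true
  calc #S * 2 ^ m ≤ ∑ u, charge #(available A rk r₀ u) * 2 ^ m := by
        rw [← sum_mul]; gcongr; exact card_le_sum_charge A rk r₀ hA hg
    _ ≤ ∑ u : Fin m, 4 * ∑ r, ((𝒮 r (u + 1)).2.2 - (𝒮 r u).2.2) :=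
        sum_le_sum fun u _ => charge_mul_two_pow_le A rk r₀ (hdeg u)
    _ = 4 * ∑ r, ∑ u : Fin m, ((𝒮 r (u + 1)).2.2 - (𝒮 r u).2.2) := by rw [← mul_sum, sum_comm]
    _ ≤ 4 * ∑ r, (𝒮 r m).2.2 := by gcongr with r; exact htel r

end RankingSimulate

/-- there is an error term `ε(OPT) → 0` such that on every 2PM instance
in which each keyword has degree at least 2, the expected profit of RankingSimulate
(over the uniformly random ranking `σ` and the fair coins `r`) is at least
`(1/2)·OPT_2P·(1 − e^{−1/2} + ε OPT_2P)`; hence its competitive ratio is at most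
`2√e/(√e − 1) ≈ 5.083`. -/
theorem stmt17 :
    ∃ ε : ℕ → ℝ, Filter.Tendsto ε Filter.atTop (nhds 0) ∧
      ∀ (m nV : ℕ) (A : Fin m → Fin nV → Prop) (_ : ∀ t v, Decidable (A t v))
        (_ : ∀ u : Fin m, ∃ v v' : Fin nV, v ≠ v' ∧ A u v ∧ A u v')
        (OPT2P : ℕ)
        (_ : IsGreatest {val : ℕ | ∃ (S : Finset (Fin m)) (g w : Fin m → Fin nV),
            IsSecondPriceMatching A S g w ∧ S.card = val} OPT2P),
        (∑ σ : Equiv.Perm (Fin nV), ∑ r : Fin m → Bool,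
            ((simStateP m A (fun v => (σ v : ℕ)) r m).2.2 : ℝ)) /
          ((Nat.factorial nV : ℝ) * 2 ^ m) ≥
        (1 / 2) * OPT2P * (1 - Real.exp (-(1 / 2)) + ε OPT2P) := by
  refine ⟨0, tendsto_const_nhds, fun m nV A _ hdeg _ hOPT => ?_⟩
  obtain ⟨S, g, w, hS, rfl⟩ := hOPT.1
  have hcount : nV.factorial * (#S * 2 ^ m) ≤
      4 * ∑ σ : Equiv.Perm (Fin nV), ∑ r, (simStateP m A (fun v => (σ v : ℕ)) r m).2.2 := calc
    _ = ∑ _σ : Equiv.Perm (Fin nV), #S * 2 ^ m := by simp [Fintype.card_perm]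
    _ ≤ _ := sum_le_sum fun σ _ => card_mul_two_pow_le_four_mul_sum_profit A _ hdeg
        (fun u hu => (hS.1 u hu).1) fun u hu u' hu' => not_imp_not.mp (hS.2.1 u hu u' hu')
    _ = _ := (mul_sum ..).symm
  have hexp : 1 - Real.exp (-(1 / 2)) ≤ 1 / 2 := by linarith [Real.add_one_le_exp (-(1 / 2))]
  rw [ge_iff_le, le_div_iff₀ (by positivity), Pi.zero_apply, add_zero]
  calc 1 / 2 * (#S : ℝ) * (1 - Real.exp (-(1 / 2))) * (nV.factorial * 2 ^ m)
      ≤ 1 / 2 * #S * (1 / 2) * (nV.factorial * 2 ^ m) := by gcongr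
    _ ≤ _ := by
      have := (Nat.cast_le (α := ℝ)).mpr hcount
      push_cast at this
      linarith
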